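/- Let d ≥ 1 and let S be a nonempty finite set of permutations of Fin d, with characteristic polynomial f_S. Then the set F = {x ∈ [0,1] : f_S(x) = x} contains 0, and the sequence of iterates f_S^{∘n}(1) converges to sSup F, the largest fixed point of f_S in [0,1]. -/

import Mathlib

/-
For a map `f` that is monotone on `[a, b]` with `a ≤ f a` and `f b ≤ b`, the orbit of `b`
decreases, stays in `[a, b]`, and stays above every fixed point `x` in `[a, b]`, since
`x = f^[n] x ≤ f^[n] b`. Its limit is therefore a fixed point by continuity, and the greatest
one. The characteristic polynomial `f_S` is such a map on `[0, 1]`: each `1 - (1 - x)^k`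
increases for `x ≤ 1`, `f_S 0 = 0`, and `f_S 1 ≤ 1` because the coefficients `D_S(k)/#S` sum
to at most `1`.
-/

open Finset Filter

/-- The number of fixed points of a permutation of `Fin d`. -/
def numFix {d : ℕ} (σ : Equiv.Perm (Fin d)) : ℕ :=
  (Finset.univ.filter fun i => σ i = i).card

/-- `D S k` is the number of permutations in `S` having exactly `k` fixed points. -/
def D {d : ℕ} (S : Finset (Equiv.Perm (Fin d))) (k : ℕ) : ℕ :=
  (S.filter fun σ => numFix σ = k).card

/-- The characteristic polynomial of a finite set of permutations of `Fin d`: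
`f_S(x) = ∑_{k=1}^{d} (D_S(k)/#S)·(1 − (1 − x)^k)`. -/
noncomputable def fS {d : ℕ} (S : Finset (Equiv.Perm (Fin d))) (x : ℝ) : ℝ :=
  ∑ k ∈ Finset.Icc 1 d, ((D S k : ℝ) / (S.card : ℝ)) * (1 - (1 - x) ^ k)

open Function Topology

section IterateMonotoneOn

variable {α : Type*} [Preorder α] {f : α → α} {a b : α}

theorem MonotoneOn.mapsTo_Icc_self (hf : MonotoneOn f (Set.Icc a b)) (ha : a ≤ f a)
    (hb : f b ≤ b) : Set.MapsTo f (Set.Icc a b) (Set.Icc a b) :=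
  hf.mapsTo_Icc.mono_right (Set.Icc_subset_Icc ha hb)

theorem MonotoneOn.antitone_iterate_right (hab : a ≤ b) (hf : MonotoneOn f (Set.Icc a b))
    (ha : a ≤ f a) (hb : f b ≤ b) : Antitone fun n => f^[n] b := by
  have hmaps := (hf.mapsTo_Icc_self ha hb).iterate
  refine antitone_nat_of_succ_le fun n => ?_
  induction n with
  | zero => exact hb
  | succ n ih =>
    simpa only [iterate_succ_apply'] using
      hf (hmaps (n + 1) (Set.right_mem_Icc.2 hab)) (hmaps n (Set.right_mem_Icc.2 hab)) ih

theorem MonotoneOn.le_iterate_right_of_isFixedPt (hf : MonotoneOn f (Set.Icc a b))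
    (ha : a ≤ f a) (hb : f b ≤ b) {x : α} (hx : x ∈ Set.Icc a b) (hfx : IsFixedPt f x) (n : ℕ) :
    x ≤ f^[n] b := by
  have hb_mem : b ∈ Set.Icc a b := Set.right_mem_Icc.2 (hx.1.trans hx.2)
  induction n with
  | zero => exact hx.2
  | succ n ih =>
    rw [iterate_succ_apply', ← hfx.eq]
    exact hf hx ((hf.mapsTo_Icc_self ha hb).iterate n hb_mem) ih

end IterateMonotoneOn

theorem MonotoneOn.tendsto_iterate_right_sSup_fixedPoints {α : Type*}
    [ConditionallyCompleteLinearOrder α] [TopologicalSpace α] [OrderTopology α] {f : α → α}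
    {a b : α} (hab : a ≤ b) (hf : MonotoneOn f (Set.Icc a b)) (hcont : ContinuousOn f (Set.Icc a b))
    (ha : a ≤ f a) (hb : f b ≤ b) :
    Tendsto (fun n => f^[n] b) atTop (𝓝 (sSup {x ∈ Set.Icc a b | f x = x})) := by
  have hmem : ∀ n, f^[n] b ∈ Set.Icc a b := fun n =>
    (hf.mapsTo_Icc_self ha hb).iterate n (Set.right_mem_Icc.2 hab)
  have hbdd : BddBelow (Set.range fun n => f^[n] b) := ⟨a, by rintro _ ⟨n, rfl⟩; exact (hmem n).1⟩
  set L := ⨅ n, f^[n] b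
  have htend : Tendsto (fun n => f^[n] b) atTop (𝓝 L) :=
    tendsto_atTop_ciInf (hf.antitone_iterate_right hab ha hb) hbdd
  have hL : L ∈ Set.Icc a b := ⟨le_ciInf fun n => (hmem n).1, ciInf_le hbdd 0⟩
  have hfix : f L = L := by
    refine tendsto_nhds_unique ?_ ((tendsto_add_atTop_iff_nat 1).2 htend)
    simp only [iterate_succ_apply']
    exact (hcont L hL).tendsto.comp (tendsto_nhdsWithin_iff.2 ⟨htend, .of_forall hmem⟩)
  have hgreatest : IsGreatest {x ∈ Set.Icc a b | f x = x} L :=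
    ⟨⟨hL, hfix⟩, fun x ⟨hx, hfx⟩ => le_ciInf (hf.le_iterate_right_of_isFixedPt ha hb hx hfx)⟩
  rwa [hgreatest.csSup_eq]

section CharacteristicPolynomial

variable {d : ℕ} (S : Finset (Equiv.Perm (Fin d)))

theorem fS_zero : fS S 0 = 0 := by
  simp [fS]

theorem continuous_fS : Continuous (fS S) :=
  continuous_finsetSum _ fun _ _ => by fun_prop

theorem monotoneOn_fS : MonotoneOn (fS S) (Set.Iic 1) := by
  intro x _ y hy hxy
  refine Finset.sum_le_sum fun k _ => mul_le_mul_of_nonneg_left ?_ (by positivity)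
  have : (1 - y) ^ k ≤ (1 - x) ^ k :=
    pow_le_pow_left₀ (sub_nonneg.2 hy) (sub_le_sub_left hxy 1) k
  linarith

theorem sum_D_le_card (t : Finset ℕ) : ∑ k ∈ t, D S k ≤ S.card := by
  unfold D
  rw [Finset.sum_card_fiberwise_eq_card_filter]
  exact Finset.card_filter_le _ _

theorem fS_one_le : fS S 1 ≤ 1 := by
  have hfS_one : fS S 1 = (∑ k ∈ Finset.Icc 1 d, (D S k : ℝ)) / S.card := by
    rw [fS, Finset.sum_div]
    refine Finset.sum_congr rfl fun k hk => ?_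
    rw [sub_self, zero_pow (by grind), sub_zero, mul_one]
  rw [hfS_one]
  exact div_le_one_of_le₀ (by exact_mod_cast sum_D_le_card S _) (Nat.cast_nonneg _)

end CharacteristicPolynomial

theorem stmt6_general (d : ℕ) (S : Finset (Equiv.Perm (Fin d))) :
    (0 : ℝ) ∈ {x ∈ Set.Icc (0 : ℝ) 1 | fS S x = x} ∧
    Tendsto (fun n => (fS S)^[n] 1) atTop
      (nhds (sSup {x ∈ Set.Icc (0 : ℝ) 1 | fS S x = x})) :=
  ⟨⟨Set.left_mem_Icc.2 zero_le_one, fS_zero S⟩,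
    ((monotoneOn_fS S).mono Set.Icc_subset_Iic_self).tendsto_iterate_right_sSup_fixedPoints
      zero_le_one (continuous_fS S).continuousOn (fS_zero S).ge (fS_one_le S)⟩

theorem stmt6 (d : ℕ) (hd : 1 ≤ d) (S : Finset (Equiv.Perm (Fin d))) (hS : S.Nonempty) :
    (0 : ℝ) ∈ {x ∈ Set.Icc (0 : ℝ) 1 | fS S x = x} ∧
    Tendsto (fun n => (fS S)^[n] 1) atTop
      (nhds (sSup {x ∈ Set.Icc (0 : ℝ) 1 | fS S x = x})) :=
  stmt6_general d S
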